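/- Let G_T be a G-system at t₀, J = {g_{1;t₀},…,g_{p;t₀}} ⊆ G_{t₀}, and G_t ∈ G_T. Then T_J(G_t) = T_{{g_{i_p;t₀}}} ∘ ⋯ ∘ T_{{g_{i₂;t₀}}} ∘ T_{{g_{i₁;t₀}}}(G_t) for any permutation (i₁,…,i_p) of (1,…,p); i.e., every co-Bongartz completion is a composition of elementary co-Bongartz completions, in any order. -/

import Mathlib

/-- A `G`-system at `t₀` (Definition 5.1.1): a collection of ℤ-bases of ℤⁿ, indexed by `T`,
satisfying the Mutation Condition, the Co-Bongartz Completion Condition and the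
Uniqueness Condition. -/
structure GSystem (n : ℕ) (T : Type) (t₀ : T) where
  g : T → Fin n → (Fin n → ℤ)
  indep : ∀ t, LinearIndependent ℤ (g t)
  span : ∀ t, Submodule.span ℤ (Set.range (g t)) = ⊤
  mutation : ∀ (t : T) (k : Fin n), ∃ t₁ : T,
    Set.range (g t) ∩ Set.range (g t₁) = Set.range (g t) \ {g t k}
  coBongartz : ∀ (t : T) (J : Set (Fin n → ℤ)), J ⊆ Set.range (g t₀) →
    ∃ t' : T, J ⊆ Set.range (g t') ∧
      ∀ (k : Fin n) (r : Fin n → ℤ), g t k = ∑ i, r i • g t' i →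
        ∀ i, g t' i ∉ J → 0 ≤ r i
  uniqueness : ∀ (u v : T) (I I' : Finset (Fin n)) (r r' : Fin n → ℤ),
    (∀ i ∈ I, 0 < r i) → (∀ j ∈ I', 0 < r' j) →
    (∑ i ∈ I, r i • g u i) = (∑ j ∈ I', r' j • g v j) →
    ∃ σ : Fin n → Fin n, Set.BijOn σ ↑I' ↑I ∧
      ∀ j ∈ I', r' j = r (σ j) ∧ g v j = g u (σ j)

/-- `G_{t'}` is a co-Bongartz completion of `J` with respect to `G_t`
(conditions (a) and (b) of Proposition-Definition 5.1.4). -/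
def GSystem.IsCoB {n : ℕ} {T : Type} {t₀ : T} (S : GSystem n T t₀)
    (J : Set (Fin n → ℤ)) (t t' : T) : Prop :=
  J ⊆ Set.range (S.g t') ∧
  ∀ (k : Fin n) (r : Fin n → ℤ), S.g t k = ∑ i, r i • S.g t' i →
    ∀ i, S.g t' i ∉ J → 0 ≤ r i

/-- `G_{t'}` is the mutation of `G_t` at `g_{k;t}`, i.e.
`G_t ∩ G_{t'} = G_t \ {g_{k;t}}` (Proposition-Definition 5.1.3). -/
def GSystem.IsMutationAt {n : ℕ} {T : Type} {t₀ : T} (S : GSystem n T t₀)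
    (t t' : T) (k : Fin n) : Prop :=
  Set.range (S.g t) ∩ Set.range (S.g t') = Set.range (S.g t) \ {S.g t k}

/-!
Co-Bongartz completions are unique and compose. Uniqueness: if `G_{t₁}` and `G_{t₂}` both
complete `J` for `G_t` and `g_{i;t₁} ∉ J`, some `y ∈ G_t` has a positive `i`-th coordinate in
`G_{t₁}`; adding to `y` the negative parts of its coordinates in `G_{t₁}` and in `G_{t₂}` (which
sit on vectors of `J`, lying in both bases) gives a vector with nonnegative coordinates in both
bases, so the Uniqueness Condition puts `g_{i;t₁}` into `G_{t₂}`. Composition: for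
`J, K ⊆ G_{t₀}`, a `K`-completion of a `J`-completion of `G_t` is a `(J ∪ K)`-completion of `G_t`,
because the vectors of `J` survive the second step and the transition coefficients multiply.
Induction along the chain of elementary completions then shows that the composite is a
completion of `J`, hence is `T_J(G_t)`.
-/

namespace GSystem

variable {n : ℕ} {T : Type} {t₀ : T} (S : GSystem n T t₀)

noncomputable def basis (t : T) : Module.Basis (Fin n) ℤ (Fin n → ℤ) :=
  Module.Basis.mk (S.indep t) (S.span t).ge

@[simp]
lemma basis_apply (t : T) (i : Fin n) : S.basis t i = S.g t i :=
  Module.Basis.mk_apply _ _ _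

lemma repr_g (t : T) (i : Fin n) : (S.basis t).repr (S.g t i) = Finsupp.single i 1 := by
  rw [← basis_apply, Module.Basis.repr_self]

lemma repr_g_nonneg (t : T) (i j : Fin n) : 0 ≤ (S.basis t).repr (S.g t i) j := by
  rw [repr_g, Finsupp.single_apply]
  split <;> norm_num

lemma repr_sum_smul_g (t : T) (r : Fin n → ℤ) (i : Fin n) :
    (S.basis t).repr (∑ j, r j • S.g t j) i = r i := by
  simp only [← basis_apply, ← Module.Basis.equivFun_symm_apply]
  exact congrFun ((S.basis t).equivFun.apply_symm_apply r) i

lemma sum_repr_smul_g (t : T) (x : Fin n → ℤ) :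
    ∑ i, (S.basis t).repr x i • S.g t i = x := by
  simpa using (S.basis t).sum_repr x

lemma exists_repr_g_ne_zero (t t' : T) (i : Fin n) :
    ∃ k, (S.basis t').repr (S.g t k) i ≠ 0 := by
  by_contra! h
  have hcoord : (S.basis t').coord i = 0 := (S.basis t).ext fun k => by simpa using h k
  simpa [repr_g] using LinearMap.congr_fun hcoord (S.basis t' i)

lemma mem_range_of_repr_nonneg {u v : T} {w : Fin n → ℤ}
    (hu : ∀ i, 0 ≤ (S.basis u).repr w i) (hv : ∀ j, 0 ≤ (S.basis v).repr w j)
    {i : Fin n} (hi : 0 < (S.basis u).repr w i) :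
    S.g u i ∈ Set.range (S.g v) := by
  have hsum : ∀ s, ∑ j ∈ ((S.basis s).repr w).support, (S.basis s).repr w j • S.g s j = w :=
    fun s => by simpa [Finsupp.linearCombination_apply, Finsupp.sum] using
      (S.basis s).linearCombination_repr w
  have hpos : ∀ s, (∀ j, 0 ≤ (S.basis s).repr w j) →
      ∀ j ∈ ((S.basis s).repr w).support, 0 < (S.basis s).repr w j :=
    fun s hs j hj => (hs j).lt_of_ne' (Finsupp.mem_support_iff.mp hj)
  obtain ⟨τ, hτ, hmatch⟩ := S.uniqueness u v _ _ _ _ (hpos u hu) (hpos v hv)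
    ((hsum u).trans (hsum v).symm)
  obtain ⟨j, hj, rfl⟩ := hτ.surjOn (Finsupp.mem_support_iff.mpr hi.ne')
  exact ⟨j, (hmatch j hj).2⟩

lemma isCoB_iff {J : Set (Fin n → ℤ)} {t t' : T} :
    S.IsCoB J t t' ↔ J ⊆ Set.range (S.g t') ∧
      ∀ k i, S.g t' i ∉ J → 0 ≤ (S.basis t').repr (S.g t k) i := by
  refine and_congr_right fun _ =>
    ⟨fun h k i hi => h k _ (S.sum_repr_smul_g t' _).symm i hi, fun h k r hr i hi => ?_⟩
  rw [← S.repr_sum_smul_g t' r i, ← hr]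
  exact h k i hi

lemma IsCoB.mem_of_repr_neg {S : GSystem n T t₀} {J : Set (Fin n → ℤ)} {t t' : T}
    (h : S.IsCoB J t t') {k i : Fin n} (hneg : (S.basis t').repr (S.g t k) i < 0) : S.g t' i ∈ J :=
  by_contra fun hi => hneg.not_ge (((S.isCoB_iff).mp h).2 k i hi)

lemma isCoB_self {J : Set (Fin n → ℤ)} {t : T} (hJ : J ⊆ Set.range (S.g t)) :
    S.IsCoB J t t :=
  (S.isCoB_iff).mpr ⟨hJ, fun k i _ => S.repr_g_nonneg t k i⟩

noncomputable def negPartVec (s : T) (y : Fin n → ℤ) : Fin n → ℤ :=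
  ∑ j, ((S.basis s).repr y j)⁻ • S.g s j

lemma repr_add_negPartVec (s : T) (y : Fin n → ℤ) (j : Fin n) :
    (S.basis s).repr (y + S.negPartVec s y) j = ((S.basis s).repr y j)⁺ := by
  simp only [map_add, Finsupp.add_apply, negPartVec, repr_sum_smul_g]
  linarith [posPart_sub_negPart ((S.basis s).repr y j)]

lemma repr_negPartVec_nonneg {s u : T} {y : Fin n → ℤ}
    (h : ∀ j, (S.basis s).repr y j < 0 → S.g s j ∈ Set.range (S.g u)) (i : Fin n) :
    0 ≤ (S.basis u).repr (S.negPartVec s y) i := by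
  simp only [negPartVec, map_sum, map_smul, Finsupp.coe_finsetSum, Finset.sum_apply,
    Finsupp.smul_apply, smul_eq_mul]
  refine Finset.sum_nonneg fun j _ => ?_
  rcases lt_or_ge ((S.basis s).repr y j) 0 with hj | hj
  · obtain ⟨k, hk⟩ := h j hj
    rw [← hk]
    exact mul_nonneg (negPart_nonneg _) (S.repr_g_nonneg u k i)
  · simp [negPart_eq_zero.mpr hj]

lemma range_subset_of_isCoB {J : Set (Fin n → ℤ)} {t t₁ t₂ : T}
    (h₁ : S.IsCoB J t t₁) (h₂ : S.IsCoB J t t₂) :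
    Set.range (S.g t₁) ⊆ Set.range (S.g t₂) := by
  rintro _ ⟨i, rfl⟩
  by_cases hJ : S.g t₁ i ∈ J
  · exact h₂.1 hJ
  obtain ⟨k, hk⟩ := S.exists_repr_g_ne_zero t t₁ i
  have hpos : 0 < (S.basis t₁).repr (S.g t k) i :=
    (((S.isCoB_iff).mp h₁).2 k i hJ).lt_of_ne' hk
  have hd₂ := S.repr_negPartVec_nonneg (s := t₂) (u := t₁) (y := S.g t k)
    fun j hj => h₁.1 (h₂.mem_of_repr_neg hj)
  have hd₁ := S.repr_negPartVec_nonneg (s := t₁) (u := t₂) (y := S.g t k)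
    fun j hj => h₂.1 (h₁.mem_of_repr_neg hj)
  refine S.mem_range_of_repr_nonneg (w := S.g t k + S.negPartVec t₁ (S.g t k) +
    S.negPartVec t₂ (S.g t k)) (fun j => ?_) (fun j => ?_) ?_
  · rw [map_add, Finsupp.add_apply, repr_add_negPartVec]
    exact add_nonneg (posPart_nonneg _) (hd₂ j)
  · rw [add_right_comm, map_add, Finsupp.add_apply, repr_add_negPartVec]
    exact add_nonneg (posPart_nonneg _) (hd₁ j)
  · rw [map_add, Finsupp.add_apply, repr_add_negPartVec, posPart_eq_self.mpr hpos.le]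
    linarith [hd₂ i]

lemma range_eq_of_isCoB {J : Set (Fin n → ℤ)} {t t₁ t₂ : T}
    (h₁ : S.IsCoB J t t₁) (h₂ : S.IsCoB J t t₂) :
    Set.range (S.g t₁) = Set.range (S.g t₂) :=
  (S.range_subset_of_isCoB h₁ h₂).antisymm (S.range_subset_of_isCoB h₂ h₁)

lemma mem_range_of_isCoB {K : Set (Fin n → ℤ)} {t₁ t₂ : T} (hK : K ⊆ Set.range (S.g t₀))
    (h : S.IsCoB K t₁ t₂) {x : Fin n → ℤ} (hx₀ : x ∈ Set.range (S.g t₀))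
    (hx₁ : x ∈ Set.range (S.g t₁)) : x ∈ Set.range (S.g t₂) := by
  obtain ⟨i₀, rfl⟩ := hx₀
  obtain ⟨i₁, hi₁⟩ := hx₁
  have hd := S.repr_negPartVec_nonneg (s := t₂) (u := t₀) (y := S.g t₀ i₀)
    fun j hj => hK (h.mem_of_repr_neg (hi₁ ▸ hj))
  refine S.mem_range_of_repr_nonneg (w := S.g t₀ i₀ + S.negPartVec t₂ (S.g t₀ i₀))
    (fun j => ?_) (fun j => ?_) (i := i₀) ?_
  · rw [map_add, Finsupp.add_apply]
    exact add_nonneg (S.repr_g_nonneg t₀ i₀ j) (hd j)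
  · exact S.repr_add_negPartVec t₂ _ j ▸ posPart_nonneg _
  · rw [map_add, Finsupp.add_apply, repr_g, Finsupp.single_eq_same]
    linarith [hd i₀]

lemma isCoB_union {J K : Set (Fin n → ℤ)} {t t₁ t₂ : T}
    (hJ : J ⊆ Set.range (S.g t₀)) (hK : K ⊆ Set.range (S.g t₀))
    (h₁ : S.IsCoB J t t₁) (h₂ : S.IsCoB K t₁ t₂) : S.IsCoB (J ∪ K) t t₂ := by
  have hJ₂ : J ⊆ Set.range (S.g t₂) := fun x hx => S.mem_range_of_isCoB hK h₂ (hJ hx) (h₁.1 hx)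
  rw [isCoB_iff] at h₁ h₂ ⊢
  refine ⟨Set.union_subset hJ₂ h₂.1, fun k j hj => ?_⟩
  rw [← (S.basis t₁).toMatrix_mulVec_repr (S.basis t₂), Matrix.mulVec, dotProduct]
  refine Finset.sum_nonneg fun i _ => ?_
  rw [Module.Basis.toMatrix_apply, basis_apply]
  by_cases hi : S.g t₁ i ∈ J
  · obtain ⟨j', hj'⟩ := hJ₂ hi
    have hjj' : j' ≠ j := by
      rintro rfl
      exact hj (Or.inl (hj' ▸ hi))
    rw [← hj', repr_g, Finsupp.single_apply, if_neg hjj', zero_mul]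
  · exact mul_nonneg (h₂.2 i j fun hK' => hj (Or.inr hK')) (h₁.2 k i hi)

lemma isCoB_range_of_chain {p : ℕ} (v : Fin p → (Fin n → ℤ))
    (hv : Set.range v ⊆ Set.range (S.g t₀)) (u : Fin (p + 1) → T)
    (hstep : ∀ i : Fin p, S.IsCoB {v i} (u i.castSucc) (u i.succ)) :
    S.IsCoB (Set.range v) (u 0) (u (Fin.last p)) := by
  induction p with
  | zero => exact S.isCoB_self (by simp)
  | succ p ih =>
    have hinit := ih (Fin.init v) ((Set.range_comp_subset_range Fin.castSucc v).trans hv)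
      (u ∘ Fin.castSucc) fun i => hstep i.castSucc
    have hlast := S.isCoB_union ((Set.range_comp_subset_range Fin.castSucc v).trans hv)
      (Set.singleton_subset_iff.mpr (hv ⟨_, rfl⟩)) hinit (hstep (Fin.last p))
    rw [← Fin.snoc_init_self v, Fin.range_snoc, ← Set.union_singleton]
    simp only [Function.comp_apply, Fin.castSucc_zero, Fin.succ_last] at hlast
    exact hlast

end GSystem

theorem stmt6_general {n : ℕ} {T : Type} {t₀ : T} (S : GSystem n T t₀) (t : T)
    (p : ℕ) (e : Fin p → (Fin n → ℤ))
    (hesub : Set.range e ⊆ Set.range (S.g t₀))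
    (σ : Equiv.Perm (Fin p))
    (u : Fin (p + 1) → T) (hu0 : u 0 = t)
    (hstep : ∀ i : Fin p, S.IsCoB {e (σ i)} (u i.castSucc) (u i.succ))
    (t' : T) (ht' : S.IsCoB (Set.range e) t t') :
    Set.range (S.g (u (Fin.last p))) = Set.range (S.g t') := by
  have hchain := S.isCoB_range_of_chain (e ∘ σ) (by rwa [EquivLike.range_comp]) u hstep
  rw [hu0, EquivLike.range_comp] at hchain
  exact S.range_eq_of_isCoB hchain ht'

/-- Corollary 5.1.10: any co-Bongartz completion `T_J(G_t)` along
`J = {g_{1;t₀}, …, g_{p;t₀}} ⊆ G_{t₀}` is the composition of the elementary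
co-Bongartz completions at the single vectors of `J`, in any order. -/
theorem stmt6 {n : ℕ} {T : Type} {t₀ : T} (S : GSystem n T t₀) (t : T)
    (p : ℕ) (e : Fin p → (Fin n → ℤ)) (he : Function.Injective e)
    (hesub : Set.range e ⊆ Set.range (S.g t₀))
    (σ : Equiv.Perm (Fin p))
    (u : Fin (p + 1) → T) (hu0 : u 0 = t)
    (hstep : ∀ i : Fin p, S.IsCoB {e (σ i)} (u i.castSucc) (u i.succ))
    (t' : T) (ht' : S.IsCoB (Set.range e) t t') :
    Set.range (S.g (u (Fin.last p))) = Set.range (S.g t') :=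
  stmt6_general S t p e hesub σ u hu0 hstep t' ht'
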